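/- arXiv:2605.17956 — 2 statements merged into one kernel-verified Lean document; each statement's English description precedes it below -/
import Mathlib

section
/- The coarse-grained Shannon entropy dominates the fine-grained entropy: if p : M → ℝ≥0 is a probability density with respect to μ and {C_k} a finite measurable partition with π_k = ∫_{C_k} p dμ and μ(C_k) < ∞, then -Σ_k π_k log(π_k/μ(C_k)) ≥ -∫_M p log p dμ. -/
open MeasureTheory

theorem coarse_entropy_dominates {M : Type*} [MeasurableSpace M] (μ : Measure M)
    (p : M → ℝ) (hpm : Measurable p) (hpnn : ∀ z, 0 ≤ p z)
    (hpint : Integrable p μ) (hp1 : ∫ z, p z ∂μ = 1)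
    (hplog : Integrable (fun z => p z * Real.log (p z)) μ)
    {n : ℕ} (C : Fin n → Set M)
    (hmeas : ∀ k, MeasurableSet (C k))
    (hdisj : Pairwise (Function.onFun Disjoint C))
    (hcover : (⋃ k, C k) = Set.univ)
    (hpos : ∀ k, 0 < μ (C k)) (hfin : ∀ k, μ (C k) < ⊤) :
    -∑ k, (∫ z in C k, p z ∂μ) *
        Real.log ((∫ z in C k, p z ∂μ) / (μ (C k)).toReal)
      ≥ -∫ z, p z * Real.log (p z) ∂μ := by
  have key : ∀ k, (∫ z in C k, p z ∂μ) *
      Real.log ((∫ z in C k, p z ∂μ) / (μ (C k)).toReal)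
      ≤ ∫ z in C k, p z * Real.log (p z) ∂μ := by
    intro k
    haveI : IsFiniteMeasure (μ.restrict (C k)) :=
      ⟨by rw [Measure.restrict_apply_univ]; exact hfin k⟩
    haveI : NeZero (μ.restrict (C k)) := by
      refine ⟨fun h => ?_⟩
      have := (hpos k).ne'
      rw [← Measure.restrict_apply_univ (C k), h] at this
      simp at this
    have hjen := Real.convexOn_mul_log.map_average_le
      (Real.continuous_mul_log.continuousOn) isClosed_Ici
      (Filter.Eventually.of_forall fun z => hpnn z)
      (hpint.restrict (s := C k))
      (by exact hplog.restrict (s := C k))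
    have hm : (μ (C k)).toReal ≠ 0 :=
      (ENNReal.toReal_pos (hpos k).ne' (hfin k).ne).ne'
    rw [average_eq, average_eq, measureReal_restrict_apply_univ, measureReal_def, smul_eq_mul,
      smul_eq_mul] at hjen
    have h2 : (μ (C k)).toReal * (((μ (C k)).toReal⁻¹ * ∫ z in C k, p z ∂μ) *
        Real.log ((μ (C k)).toReal⁻¹ * ∫ z in C k, p z ∂μ))
        ≤ (μ (C k)).toReal * ((μ (C k)).toReal⁻¹ * ∫ z in C k, p z * Real.log (p z) ∂μ) :=
      mul_le_mul_of_nonneg_left hjen ENNReal.toReal_nonneg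
    rw [← mul_assoc, ← mul_assoc, mul_inv_cancel₀ hm, one_mul] at h2
    calc (∫ z in C k, p z ∂μ) * Real.log ((∫ z in C k, p z ∂μ) / (μ (C k)).toReal)
        = (∫ z in C k, p z ∂μ) * Real.log ((μ (C k)).toReal⁻¹ * ∫ z in C k, p z ∂μ) := by
          rw [div_eq_inv_mul]
      _ ≤ _ := h2.trans_eq (by rw [← mul_assoc, mul_inv_cancel₀ hm, one_mul])
  have hsum : ∑ k, ∫ z in C k, p z * Real.log (p z) ∂μ = ∫ z, p z * Real.log (p z) ∂μ := by
    rw [← integral_iUnion_fintype hmeas hdisj (fun k => hplog.integrableOn), hcover,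
      Measure.restrict_univ]
  have : ∑ k, (∫ z in C k, p z ∂μ) *
      Real.log ((∫ z in C k, p z ∂μ) / (μ (C k)).toReal)
      ≤ ∫ z, p z * Real.log (p z) ∂μ := by
    rw [← hsum]; exact Finset.sum_le_sum fun k _ => key k
  linarith
end

section
/- Mutual information bound from a probability perturbation: let π_{αβ} = p_α q_β (1 + ε_{αβ}) be a probability distribution on a finite product set with |ε_{αβ}| ≤ δ < 1/2 and with marginals exactly p and q; then the mutual information satisfies I(π) ≤ 2δ²/(1-δ) · Σ_{α,β} p_α q_β ≤ 2δ²/(1-δ). -/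
/-!
With `w = p ⊗ q`, the mutual information is the Kullback–Leibler divergence of `π = w (1 + ε)`
from `w`. Pointwise, `log x ≥ 1 - 1/x` gives `π log (π / w) ≥ π - w`, which sums to `0`
(Gibbs), while `log (1 + ε) ≤ ε` gives `π log (π / w) ≤ w ε + w ε²`. Equal total masses
force `∑ w ε = 0`, so the divergence is at most `∑ w ε² ≤ δ² ≤ 2δ²/(1-δ)`.
-/

open Finset

lemma sub_le_mul_log_div {x y : ℝ} (hx : 0 < x) (hy : 0 < y) :
    x - y ≤ x * Real.log (x / y) := by
  have h := Real.one_sub_inv_le_log_of_pos (div_pos hx hy)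
  rw [inv_div] at h
  calc x - y = x * (1 - y / x) := by field_simp
    _ ≤ x * Real.log (x / y) := mul_le_mul_of_nonneg_left h hx.le

lemma mul_one_add_mul_log_one_add_le {w e : ℝ} (hw : 0 ≤ w) (he : -1 < e) :
    w * (1 + e) * Real.log (1 + e) ≤ w * e + w * e ^ 2 := by
  have hlog : Real.log (1 + e) ≤ e := by
    simpa using Real.log_le_sub_one_of_pos (show 0 < 1 + e by linarith)
  calc w * (1 + e) * Real.log (1 + e) ≤ w * (1 + e) * e :=
        mul_le_mul_of_nonneg_left hlog (mul_nonneg hw (by linarith))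
    _ = w * e + w * e ^ 2 := by ring

section Divergence

variable {ι : Type*} [Fintype ι] {π w : ι → ℝ}

theorem sum_mul_log_div_nonneg (hπ : ∀ i, 0 < π i) (hw : ∀ i, 0 < w i)
    (hmass : ∑ i, π i = ∑ i, w i) : 0 ≤ ∑ i, π i * Real.log (π i / w i) :=
  calc 0 = ∑ i, (π i - w i) := by rw [sum_sub_distrib, hmass, sub_self]
    _ ≤ ∑ i, π i * Real.log (π i / w i) :=
        sum_le_sum fun i _ => sub_le_mul_log_div (hπ i) (hw i)

theorem sum_mul_log_div_le_sum_mul_sq {ε : ι → ℝ} (hw : ∀ i, 0 < w i)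
    (hπ : ∀ i, π i = w i * (1 + ε i)) (hε : ∀ i, -1 < ε i)
    (hmass : ∑ i, π i = ∑ i, w i) :
    ∑ i, π i * Real.log (π i / w i) ≤ ∑ i, w i * ε i ^ 2 := by
  have hratio : ∀ i, π i / w i = 1 + ε i := fun i => by
    rw [hπ i, mul_div_cancel_left₀ _ (hw i).ne']
  have hmean : ∑ i, w i * ε i = 0 := by
    have : ∑ i, π i = ∑ i, w i + ∑ i, w i * ε i := by
      rw [← sum_add_distrib]; exact sum_congr rfl fun i _ => by rw [hπ i]; ring
    linarith
  calc ∑ i, π i * Real.log (π i / w i) ≤ ∑ i, (w i * ε i + w i * ε i ^ 2) :=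
        sum_le_sum fun i _ => by
          rw [hratio i, hπ i]; exact mul_one_add_mul_log_one_add_le (hw i).le (hε i)
    _ = ∑ i, w i * ε i ^ 2 := by rw [sum_add_distrib, hmean, zero_add]

theorem sum_mul_sq_le_of_abs_le {ε : ι → ℝ} {δ : ℝ} (hw : ∀ i, 0 ≤ w i)
    (hε : ∀ i, |ε i| ≤ δ) :
    ∑ i, w i * ε i ^ 2 ≤ δ ^ 2 * ∑ i, w i := by
  rw [mul_sum]
  exact sum_le_sum fun i _ => by
    rw [mul_comm _ (w i)]
    exact mul_le_mul_of_nonneg_left (sq_le_sq.mpr ((hε i).trans (le_abs_self δ))) (hw i)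

end Divergence

theorem mutual_information_perturbation_bound_general {A B : Type*} [Fintype A] [Fintype B]
    (p : A → ℝ) (q : B → ℝ) (hp : ∀ a, 0 < p a) (hq : ∀ b, 0 < q b)
    (hpsum : ∑ a, p a = 1) (hqsum : ∑ b, q b = 1)
    (ε : A × B → ℝ) (δ : ℝ) (hδ : δ < 1 / 2)
    (hε : ∀ ab, |ε ab| ≤ δ)
    (π : A × B → ℝ) (hπ : ∀ ab, π ab = p ab.1 * q ab.2 * (1 + ε ab))
    (hmarg1 : ∀ a, ∑ b, π (a, b) = p a) :
    0 ≤ ∑ a, ∑ b, π (a, b) * Real.log (π (a, b) / (p a * q b)) ∧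
      (∑ a, ∑ b, π (a, b) * Real.log (π (a, b) / (p a * q b)))
        ≤ 2 * δ ^ 2 / (1 - δ) := by
  set w : A × B → ℝ := fun ab => p ab.1 * q ab.2
  rw [← Fintype.sum_prod_type']
  have hw : ∀ ab, 0 < w ab := fun ab => mul_pos (hp ab.1) (hq ab.2)
  have hε₁ : ∀ ab, -1 < ε ab := fun ab => by linarith [neg_abs_le (ε ab), hε ab]
  have hπpos : ∀ ab, 0 < π ab := fun ab => by
    rw [hπ ab]; exact mul_pos (hw ab) (by linarith [hε₁ ab])
  have hwsum : ∑ ab, w ab = 1 := by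
    rw [Fintype.sum_prod_type, ← Fintype.sum_mul_sum, hpsum, hqsum, one_mul]
  have hmass : ∑ ab, π ab = ∑ ab, w ab := by
    rw [hwsum, Fintype.sum_prod_type]; simp only [hmarg1, hpsum]
  obtain ⟨a, -⟩ := nonempty_of_sum_ne_zero (hpsum ▸ one_ne_zero : ∑ a, p a ≠ 0)
  obtain ⟨b, -⟩ := nonempty_of_sum_ne_zero (hqsum ▸ one_ne_zero : ∑ b, q b ≠ 0)
  have hδ₀ : 0 ≤ δ := (abs_nonneg _).trans (hε (a, b))
  refine ⟨sum_mul_log_div_nonneg hπpos hw hmass, ?_⟩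
  calc ∑ ab, π ab * Real.log (π ab / w ab) ≤ ∑ ab, w ab * ε ab ^ 2 :=
        sum_mul_log_div_le_sum_mul_sq hw hπ hε₁ hmass
    _ ≤ δ ^ 2 * ∑ ab, w ab := sum_mul_sq_le_of_abs_le (fun ab => (hw ab).le) hε
    _ = δ ^ 2 := by rw [hwsum, mul_one]
    _ ≤ 2 * δ ^ 2 / (1 - δ) := by
        rw [le_div_iff₀ (by linarith)]; nlinarith [sq_nonneg δ]

theorem mutual_information_perturbation_bound {A B : Type*} [Fintype A] [Fintype B]
    (p : A → ℝ) (q : B → ℝ) (hp : ∀ a, 0 < p a) (hq : ∀ b, 0 < q b)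
    (hpsum : ∑ a, p a = 1) (hqsum : ∑ b, q b = 1)
    (ε : A × B → ℝ) (δ : ℝ) (hδ : δ < 1 / 2)
    (hε : ∀ ab, |ε ab| ≤ δ)
    (π : A × B → ℝ) (hπ : ∀ ab, π ab = p ab.1 * q ab.2 * (1 + ε ab))
    (hπnn : ∀ ab, 0 ≤ π ab)
    (hmarg1 : ∀ a, ∑ b, π (a, b) = p a)
    (hmarg2 : ∀ b, ∑ a, π (a, b) = q b) :
    0 ≤ ∑ a, ∑ b, π (a, b) * Real.log (π (a, b) / (p a * q b)) ∧
      (∑ a, ∑ b, π (a, b) * Real.log (π (a, b) / (p a * q b)))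
        ≤ 2 * δ ^ 2 / (1 - δ) :=
  mutual_information_perturbation_bound_general p q hp hq hpsum hqsum ε δ hδ hε π hπ hmarg1
end
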